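/- arXiv:2501.04980 — 4 statements merged into one kernel-verified Lean document; each statement's English description precedes it below -/
import Mathlib

section
/- For all integers n ≥ 2 and k with 1 ≤ k ≤ ((n−2)/2)², setting m = 2⌊√k⌋ + 2 and l = ⌊n/m⌋, one has m ≤ n, every edge of a convex-position straight-line drawing of K_m has at most ⌊√k⌋² ≤ k crossings, and l·C(m,2) ≥ n·√k/8. -/
/-!
For an edge `pq` of points in convex position, no other point lies on the line `pq`, so the
other `m - 2` points split into the two open sides of that line, say `a` and `b` of them. An edge
crossing `pq` in its interior must join the two sides, so there are at most
`a * b ≤ ((m - 2) / 2) ^ 2` such edges. The counting bound combines `n ≤ 2 ⌊n / m⌋ m` (valid as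
`m ≤ n`) with `√k ≤ ⌊√k⌋ + 1 ≤ m`.
-/

open Finset

section SignChanges

variable {ι R : Type*} [Fintype ι] [LinearOrder ι] [Ring R] [LinearOrder R] [IsStrictOrderedRing R]

theorem ncard_signChange_le (φ : ι → R) :
    {e : ι × ι | e.1 < e.2 ∧ φ e.1 * φ e.2 < 0}.ncard ≤ #{i | 0 < φ i} * #{i | φ i < 0} := by
  classical
  have hsub : {e : ι × ι | e.1 < e.2 ∧ φ e.1 * φ e.2 < 0} ⊆
      ((({i | 0 < φ i} : Finset ι) ×ˢ ({i | φ i < 0} : Finset ι)).image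
        fun e => (min e.1 e.2, max e.1 e.2) : Finset (ι × ι)) := by
    rintro ⟨a, b⟩ ⟨hab, hneg⟩
    simp only [coe_image, coe_product, coe_filter, mem_univ, true_and, Set.mem_image,
      Set.mem_prod, Set.mem_ofPred_eq, Prod.mk.injEq, Prod.exists]
    rcases mul_neg_iff.1 hneg with ⟨ha, hb⟩ | ⟨ha, hb⟩
    · exact ⟨a, b, ⟨ha, hb⟩, min_eq_left hab.le, max_eq_right hab.le⟩
    · exact ⟨b, a, ⟨hb, ha⟩, min_eq_right hab.le, max_eq_left hab.le⟩
  calc _ ≤ _ := Set.ncard_le_ncard hsub (Finset.finite_toSet _)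
    _ = _ := Set.ncard_coe_finset _
    _ ≤ _ := card_image_le
    _ = _ := card_product _ _

theorem four_mul_ncard_signChange_le (φ : ι → R) :
    4 * {e : ι × ι | e.1 < e.2 ∧ φ e.1 * φ e.2 < 0}.ncard ≤ #{i | φ i ≠ 0} ^ 2 := by
  have hsplit : #{i | φ i ≠ 0} = #{i | 0 < φ i} + #{i | φ i < 0} := by
    rw [← card_union_of_disjoint (disjoint_filter.2 fun _ _ h h' => h.not_gt h'), ← filter_or]
    simp only [ne_iff_lt_or_gt, or_comm]
  calc _ ≤ 4 * (#{i | 0 < φ i} * #{i | φ i < 0}) := by gcongr; exact ncard_signChange_le φ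
    _ ≤ _ := by rw [hsplit, ← mul_assoc]; exact four_mul_le_sq_add _ _

end SignChanges

/-- Twice the signed area of the triangle `P Q x`; its sign tells on which side of the line `PQ`
the point `x` lies. -/
def orient (P Q x : ℝ × ℝ) : ℝ := (Q.1 - P.1) * (x.2 - P.2) - (Q.2 - P.2) * (x.1 - P.1)

section Orient

variable {P Q a b x : ℝ × ℝ}

@[simp] lemma orient_self_left : orient P Q P = 0 := by simp [orient]

@[simp] lemma orient_self_right : orient P Q Q = 0 := by unfold orient; ring

lemma orient_add_smul {u v : ℝ} (huv : u + v = 1) :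
    orient P Q (u • a + v • b) = u * orient P Q a + v * orient P Q b := by
  obtain rfl : v = 1 - u := by linarith
  simp only [orient, Prod.fst_add, Prod.snd_add, Prod.smul_fst, Prod.smul_snd, smul_eq_mul]
  ring

lemma collinear_of_orient_eq_zero (hPQ : P ≠ Q) (h : orient P Q x = 0) :
    Collinear ℝ {x, P, Q} := by
  apply collinear_insert_of_mem_affineSpan_pair
  unfold orient at h
  by_cases h1 : Q.1 - P.1 = 0
  · have h2 : Q.2 - P.2 ≠ 0 := fun h2 => hPQ (Prod.ext (by linarith) (by linarith)).symm
    convert AffineMap.lineMap_mem_affineSpan_pair ((x.2 - P.2) / (Q.2 - P.2)) P Q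
    rw [AffineMap.lineMap_apply_module]
    ext <;> simp only [Prod.fst_add, Prod.snd_add, Prod.smul_fst, Prod.smul_snd, smul_eq_mul] <;>
      field_simp <;> nlinarith
  · convert AffineMap.lineMap_mem_affineSpan_pair ((x.1 - P.1) / (Q.1 - P.1)) P Q
    rw [AffineMap.lineMap_apply_module]
    ext <;> simp only [Prod.fst_add, Prod.snd_add, Prod.smul_fst, Prod.smul_snd, smul_eq_mul] <;>
      field_simp <;> nlinarith

lemma orient_mul_orient_neg (h : (openSegment ℝ a b ∩ openSegment ℝ P Q).Nonempty)
    (hab : orient P Q a ≠ 0 ∨ orient P Q b ≠ 0) : orient P Q a * orient P Q b < 0 := by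
  obtain ⟨x, ⟨u, v, hu, hv, huv, rfl⟩, ⟨u', v', -, -, huv', hx⟩⟩ := h
  have hsum : u * orient P Q a + v * orient P Q b = 0 := by
    rw [← orient_add_smul huv, ← hx, orient_add_smul huv']
    simp
  rcases hab with h | h
  · have : v * (orient P Q a * orient P Q b) = -(u * (orient P Q a * orient P Q a)) := by
      linear_combination orient P Q a * hsum
    nlinarith [mul_pos hu (mul_self_pos.2 h)]
  · have : u * (orient P Q a * orient P Q b) = -(v * (orient P Q b * orient P Q b)) := by
      linear_combination orient P Q b * hsum
    nlinarith [mul_pos hv (mul_self_pos.2 h)]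

end Orient

section ConvexPosition

variable {ι : Type*} {f : ι → ℝ × ℝ}

lemma ConvexIndependent.not_wbtw (hf : ConvexIndependent ℝ f) {i j k : ι} (hij : i ≠ j)
    (hkj : k ≠ j) : ¬Wbtw ℝ (f i) (f j) (f k) := by
  intro h
  have : f j ∈ convexHull ℝ (f '' {i, k}) := by
    rw [Set.image_pair, convexHull_pair]
    exact mem_segment_iff_wbtw.2 h
  rcases (hf.mem_convexHull_iff _ _).1 this with h | h
  exacts [hij h.symm, hkj h.symm]

lemma ConvexIndependent.eq_or_eq_of_orient_eq_zero (hf : ConvexIndependent ℝ f) {p q i : ι}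
    (hpq : p ≠ q) (h : orient (f p) (f q) (f i) = 0) : i = p ∨ i = q := by
  by_contra! hi
  rcases (collinear_of_orient_eq_zero (hf.injective.ne hpq) h).wbtw_or_wbtw_or_wbtw with h | h | h
  · exact hf.not_wbtw hi.1 hpq.symm h
  · exact hf.not_wbtw hpq hi.2 h
  · exact hf.not_wbtw hi.2.symm hi.1.symm h

def crossingEdges [LT ι] (f : ι → ℝ × ℝ) (p q : ι) : Set (ι × ι) :=
  {e | e.1 < e.2 ∧ ¬(e = (p, q) ∨ e = (q, p)) ∧
    (openSegment ℝ (f e.1) (f e.2) ∩ openSegment ℝ (f p) (f q)).Nonempty}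

theorem ConvexIndependent.four_mul_ncard_crossingEdges_le [Fintype ι] [LinearOrder ι]
    (hf : ConvexIndependent ℝ f) {p q : ι} (hpq : p ≠ q) :
    4 * (crossingEdges f p q).ncard ≤ (Fintype.card ι - 2) ^ 2 := by
  classical
  set φ : ι → ℝ := fun i => orient (f p) (f q) (f i)
  have hsub : crossingEdges f p q ⊆ {e : ι × ι | e.1 < e.2 ∧ φ e.1 * φ e.2 < 0} := by
    rintro e ⟨hlt, hne, hx⟩
    refine ⟨hlt, orient_mul_orient_neg hx ?_⟩
    by_contra! h
    rcases hf.eq_or_eq_of_orient_eq_zero hpq h.1 with h1 | h1 <;>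
      rcases hf.eq_or_eq_of_orient_eq_zero hpq h.2 with h2 | h2 <;> simp_all [Prod.ext_iff]
  have hzeros : #{i | φ i ≠ 0} ≤ Fintype.card ι - 2 := by
    calc #{i | φ i ≠ 0} ≤ #(univ \ {p, q}) := by
          refine card_le_card fun i hi => ?_
          simp only [mem_filter, mem_univ, true_and] at hi
          simp only [mem_sdiff, mem_univ, mem_insert, mem_singleton, true_and]
          rintro (rfl | rfl) <;> simp [φ] at hi
      _ = Fintype.card ι - 2 := by rw [card_univ_sdiff, card_pair hpq]
  calc 4 * (crossingEdges f p q).ncard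
      ≤ 4 * {e : ι × ι | e.1 < e.2 ∧ φ e.1 * φ e.2 < 0}.ncard := by
        gcongr; exact Set.toFinite _
    _ ≤ #{i | φ i ≠ 0} ^ 2 := four_mul_ncard_signChange_le φ
    _ ≤ _ := by gcongr

end ConvexPosition

lemma Nat.le_two_mul_div_mul {m n : ℕ} (hm : 0 < m) (hmn : m ≤ n) : n ≤ 2 * (n / m) * m := by
  have h1 : 1 ≤ n / m := (Nat.one_le_div_iff hm).2 hmn
  have h2 : n < n / m * m + m := Nat.lt_div_mul_add hm
  nlinarith

lemma mul_le_eight_mul_div_mul_choose_two {m n : ℕ} (hm : 2 ≤ m) (hmn : m ≤ n) :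
    n * m ≤ 8 * (n / m * m.choose 2) := by
  have hc : 2 * m.choose 2 = m * (m - 1) := by
    rw [Nat.choose_two_right, Nat.mul_div_cancel' (Nat.even_mul_pred_self m).two_dvd]
  calc n * m ≤ 2 * (n / m) * m * m := Nat.mul_le_mul_right m (Nat.le_two_mul_div_mul (by omega) hmn)
    _ ≤ 2 * (n / m) * m * (2 * (m - 1)) := Nat.mul_le_mul_left _ (by omega)
    _ = 8 * (n / m * m.choose 2) := by linear_combination (4 * (n / m)) * hc.symm

lemma two_mul_sqrt_add_two_le {n k : ℕ} (hn : 2 ≤ n) (hk : (k : ℝ) ≤ (((n : ℝ) - 2) / 2) ^ 2) :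
    2 * Nat.sqrt k + 2 ≤ n := by
  have hn' : (0 : ℝ) ≤ ((n : ℝ) - 2) / 2 := by
    have : (2 : ℝ) ≤ n := by exact_mod_cast hn
    linarith
  have : (Nat.sqrt k : ℝ) ≤ ((n : ℝ) - 2) / 2 :=
    calc (Nat.sqrt k : ℝ) ≤ √k := Real.nat_sqrt_le_real_sqrt
      _ ≤ √((((n : ℝ) - 2) / 2) ^ 2) := Real.sqrt_le_sqrt hk
      _ = _ := Real.sqrt_sq hn'
  have : ((2 * Nat.sqrt k + 2 : ℕ) : ℝ) ≤ n := by push_cast; linarith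
  exact_mod_cast this

theorem stmt6_general (n k : ℕ) (hn : 2 ≤ n)
    (hk2 : (k : ℝ) ≤ (((n : ℝ) - 2) / 2) ^ 2)
    (m l : ℕ) (hm : m = 2 * Nat.sqrt k + 2) (hl : l = n / m) :
    m ≤ n ∧ Nat.sqrt k ^ 2 ≤ k ∧
    (∀ f : Fin m → ℝ × ℝ, Function.Injective f →
      (∀ i : Fin m, f i ∉ convexHull ℝ (f '' {j | j ≠ i})) →
      ∀ p q : Fin m, p ≠ q →
        Set.ncard {e : Fin m × Fin m | e.1 < e.2 ∧ ¬(e = (p, q) ∨ e = (q, p)) ∧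
            (openSegment ℝ (f e.1) (f e.2) ∩ openSegment ℝ (f p) (f q)).Nonempty}
          ≤ Nat.sqrt k ^ 2) ∧
    (n : ℝ) * Real.sqrt k / 8 ≤ (l * m.choose 2 : ℝ) := by
  have hmn : m ≤ n := hm ▸ two_mul_sqrt_add_two_le hn hk2
  refine ⟨hmn, Nat.sqrt_le' k, fun f _ hconv p q hpq => ?_, ?_⟩
  · have hf : ConvexIndependent ℝ f := convexIndependent_iff_notMem_convexHull_sdiff.2
      fun i s hi => hconv i (convexHull_mono (Set.image_mono fun j hj => hj.2) hi)
    have := hf.four_mul_ncard_crossingEdges_le hpq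
    rw [Fintype.card_fin, show m - 2 = 2 * Nat.sqrt k by omega] at this
    change (crossingEdges f p q).ncard ≤ _
    nlinarith
  · have hsqrt : √(k : ℝ) ≤ m :=
      Real.real_sqrt_le_nat_sqrt_succ.trans (by exact_mod_cast (by omega : Nat.sqrt k + 1 ≤ m))
    have hcount : (n * m : ℝ) ≤ 8 * (l * m.choose 2) := by
      rw [hl]; exact_mod_cast mul_le_eight_mul_div_mul_choose_two (by omega) hmn
    calc (n : ℝ) * √k / 8 ≤ n * m / 8 := by gcongr
      _ ≤ l * m.choose 2 := by linarith

/-- Arithmetic core of the construction showing `max S_k(K_n) = Ω(n√k)`: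
for `2 ≤ n` and `1 ≤ k ≤ ((n−2)/2)²`, with `m = 2⌊√k⌋ + 2` and `l = ⌊n/m⌋`, one has
`m ≤ n`, every edge of a convex-position straight-line drawing of `K m` has at most
`⌊√k⌋² ≤ k` crossings, and `l·C(m,2) ≥ n·√k/8`. -/
theorem stmt6 (n k : ℕ) (hn : 2 ≤ n) (hk : 1 ≤ k)
    (hk2 : (k : ℝ) ≤ (((n : ℝ) - 2) / 2) ^ 2)
    (m l : ℕ) (hm : m = 2 * Nat.sqrt k + 2) (hl : l = n / m) :
    m ≤ n ∧ Nat.sqrt k ^ 2 ≤ k ∧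
    (∀ f : Fin m → ℝ × ℝ, Function.Injective f →
      (∀ i : Fin m, f i ∉ convexHull ℝ (f '' {j | j ≠ i})) →
      ∀ p q : Fin m, p ≠ q →
        Set.ncard {e : Fin m × Fin m | e.1 < e.2 ∧ ¬(e = (p, q) ∨ e = (q, p)) ∧
            (openSegment ℝ (f e.1) (f e.2) ∩ openSegment ℝ (f p) (f q)).Nonempty}
          ≤ Nat.sqrt k ^ 2) ∧
    (n : ℝ) * Real.sqrt k / 8 ≤ (l * m.choose 2 : ℝ) :=
  stmt6_general n k hn hk2 m l hm hl
end

section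
/- Let n be a sufficiently large integer, let n < k < n^{1.2}, and suppose τ(k) < n^{0.2}. Then for at least one integer j with n − ⌈n^{0.2}⌉ ≤ j ≤ n, the integer k belongs to neither T_j nor T_{n−j}, where T_m = { a(m−2−a) : 1 ≤ a ≤ ⌊(m−2)/2⌋ }. -/
/-- The set `T_m = { a·(m−2−a) : 1 ≤ a ≤ ⌊(m−2)/2⌋ }`. -/
def Tset (m : ℕ) : Set ℕ := {x | ∃ a : ℕ, 1 ≤ a ∧ a ≤ (m - 2) / 2 ∧ x = a * (m - 2 - a)}

lemma Tset_recover {k j a : ℕ} (h1 : 1 ≤ a) (h2 : a ≤ (j - 2) / 2)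
    (heq : k = a * (j - 2 - a)) : j = a + k / a + 2 := by
  have h2' : a * 2 ≤ j - 2 := (Nat.le_div_iff_mul_le (by norm_num)).mp h2
  have hk : k / a = j - 2 - a := by
    rw [heq, Nat.mul_div_cancel_left _ h1]
  rw [hk]; omega

/-- For sufficiently large `n` and any `k` with `n < k < n^{1.2}`
such that `τ(k) < n^{0.2}`, there is an integer `j` with
`n − ⌈n^{0.2}⌉ ≤ j ≤ n` for which `k ∉ T_j` and `k ∉ T_{n−j}`. -/
theorem stmt12 :
    ∃ N : ℕ, ∀ n : ℕ, N ≤ n → ∀ k : ℕ, n < k →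
      (k : ℝ) < (n : ℝ) ^ (1.2 : ℝ) →
      ((k.divisors.card : ℝ) < (n : ℝ) ^ (0.2 : ℝ)) →
      ∃ j : ℕ, n - ⌈(n : ℝ) ^ (0.2 : ℝ)⌉₊ ≤ j ∧ j ≤ n ∧
        k ∉ Tset j ∧ k ∉ Tset (n - j) := by
  classical
  refine ⟨256, fun n hn k hnk _ hτ => ?_⟩
  set c : ℕ := ⌈(n : ℝ) ^ (0.2 : ℝ)⌉₊ with hc
  have hn0 : (0 : ℝ) < (n : ℝ) := by positivity
  have hn1 : (1 : ℝ) ≤ (n : ℝ) := by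
    have : 1 ≤ n := by omega
    exact_mod_cast this
  have hr1 : (1 : ℝ) ≤ (n : ℝ) ^ (0.2 : ℝ) :=
    Real.one_le_rpow hn1 (by norm_num)
  -- c ≤ 2 n^{0.2}
  have hcle : (c : ℝ) ≤ 2 * (n : ℝ) ^ (0.2 : ℝ) := by
    have := Nat.ceil_lt_add_one (le_of_lt (lt_of_lt_of_le one_pos hr1)) (a := (n : ℝ) ^ (0.2 : ℝ))
    rw [← hc] at this
    linarith
  -- 4 ≤ n^{0.6}
  have h06 : (4 : ℝ) ≤ (n : ℝ) ^ (0.6 : ℝ) := by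
    have h256 : (256 : ℝ) ≤ (n : ℝ) := by exact_mod_cast hn
    have h1 : (256 : ℝ) ^ (0.5 : ℝ) ≤ (n : ℝ) ^ (0.5 : ℝ) :=
      Real.rpow_le_rpow (by norm_num) h256 (by norm_num)
    have h2 : (n : ℝ) ^ (0.5 : ℝ) ≤ (n : ℝ) ^ (0.6 : ℝ) :=
      Real.rpow_le_rpow_of_exponent_le hn1 (by norm_num)
    have h3 : (256 : ℝ) ^ (0.5 : ℝ) = 16 := by
      rw [show (256 : ℝ) = 16 ^ (2 : ℕ) by norm_num, ← Real.rpow_natCast (16 : ℝ) 2,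
        ← Real.rpow_mul (by norm_num)]
      norm_num
    linarith
  -- c * c ≤ n
  have hccn : c * c ≤ n := by
    have hsq : ((c : ℝ)) * c ≤ 4 * ((n : ℝ) ^ (0.2 : ℝ) * (n : ℝ) ^ (0.2 : ℝ)) := by
      nlinarith [hcle, Nat.cast_nonneg (α := ℝ) c, hr1]
    have h04 : (n : ℝ) ^ (0.2 : ℝ) * (n : ℝ) ^ (0.2 : ℝ) = (n : ℝ) ^ (0.4 : ℝ) := by
      rw [← Real.rpow_add hn0]; norm_num
    have hsplit : (n : ℝ) = (n : ℝ) ^ (0.6 : ℝ) * (n : ℝ) ^ (0.4 : ℝ) := by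
      rw [← Real.rpow_add hn0]; norm_num
    have h04pos : (0 : ℝ) ≤ (n : ℝ) ^ (0.4 : ℝ) := by positivity
    have : ((c : ℝ)) * c ≤ (n : ℝ) := by
      rw [h04] at hsq
      calc ((c : ℝ)) * c ≤ 4 * (n : ℝ) ^ (0.4 : ℝ) := hsq
      _ ≤ (n : ℝ) ^ (0.6 : ℝ) * (n : ℝ) ^ (0.4 : ℝ) := by nlinarith
      _ = (n : ℝ) := hsplit.symm
    exact_mod_cast this
  have hc1 : 1 ≤ c := Nat.one_le_iff_ne_zero.mpr (by
    intro h
    rw [hc] at h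
    have := Nat.ceil_eq_zero.mp h
    linarith)
  have hcn : c ≤ n := le_trans (Nat.le_mul_of_pos_left c hc1) hccn
  have hk0 : k ≠ 0 := by omega
  -- τ(k) < c
  have hτc : k.divisors.card < c := by
    have : ((k.divisors.card : ℝ)) < (c : ℝ) := lt_of_lt_of_le hτ (Nat.le_ceil _)
    exact_mod_cast this
  -- the bad set
  set s : Finset ℕ := (Finset.Icc (n - c) n).filter (fun j => k ∈ Tset j) with hs
  have hscard : s.card ≤ k.divisors.card := by
    apply Finset.card_le_card_of_injOn
      (fun j => if h : k ∈ Tset j then Classical.choose h else 0)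
    · intro j hj
      have hjT : k ∈ Tset j := (Finset.mem_filter.mp hj).2
      simp only [hjT, dif_pos]
      obtain ⟨h1, h2, heq⟩ := Classical.choose_spec hjT
      exact Nat.mem_divisors.mpr ⟨⟨_, heq⟩, hk0⟩
    · intro j1 hj1 j2 hj2 hfe
      have hT1 : k ∈ Tset j1 := (Finset.mem_filter.mp hj1).2
      have hT2 : k ∈ Tset j2 := (Finset.mem_filter.mp hj2).2
      simp only [hT1, hT2, dif_pos] at hfe
      obtain ⟨h11, h12, h13⟩ := Classical.choose_spec hT1
      obtain ⟨h21, h22, h23⟩ := Classical.choose_spec hT2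
      have e1 := Tset_recover h11 h12 h13
      have e2 := Tset_recover h21 h22 h23
      rw [e1, e2, hfe]
  have hicc : (Finset.Icc (n - c) n).card = c + 1 := by
    rw [Nat.card_Icc]; omega
  have hlt : s.card < (Finset.Icc (n - c) n).card := by
    rw [hicc]; omega
  have : ¬ Finset.Icc (n - c) n ⊆ s := fun h => absurd (Finset.card_le_card h) (by omega)
  obtain ⟨j, hjmem, hjns⟩ := Finset.not_subset.mp this
  have hjb := Finset.mem_Icc.mp hjmem
  refine ⟨j, hjb.1, hjb.2, ?_, ?_⟩
  · intro hjT
    exact hjns (Finset.mem_filter.mpr ⟨hjmem, hjT⟩)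
  · rintro ⟨a, ha1, ha2, haeq⟩
    have hm : n - j ≤ c := by omega
    have h1 : a ≤ n - j := le_trans ha2 (le_trans (Nat.div_le_self _ _) (Nat.sub_le _ _))
    have h2 : n - j - 2 - a ≤ n - j := by omega
    have : k ≤ (n - j) * (n - j) := haeq ▸ Nat.mul_le_mul h1 h2
    have : k ≤ c * c := le_trans this (Nat.mul_le_mul hm hm)
    omega
end

section
/- In the drawing D_{a,b,c} of K_{a+b+c} formed by three mutually facing flattened convex arcs with a, b, c points respectively, the edge connecting the m-th vertex of the upper arc (of size a) to the l-th vertex of the lower arc (of size b) is crossed by exactly (m−1)·(b−l) + (l−1)·(a−m) + c·(m+l−2) other edges, where vertices of both arcs are numbered 1..a and 1..b from left to right and the third arc has c points. (Take a = ⌊n/2⌋−i, b = ⌈n/2⌉−j, c = i+j to recover the formula (m−1)(⌈n/2⌉−j−l) + (l−1)(⌊n/2⌋−i−m) + (i+j)(m+l−2) from the paper.) -/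
/-!
Every edge counted on the left crosses the chord from upper vertex `m` to lower vertex `l`
because it joins the two sides of that chord. The upper–lower edges doing so pair one of the
`m - 1` upper vertices left of `m` with one of the `b - l` lower vertices right of `l`, or one of
the `a - m` upper vertices right of `m` with one of the `l - 1` lower vertices left of `l`; the
third arc lies entirely on one side, so each of its `c` vertices is joined across the chord to
the `m - 1` and `l - 1` vertices on the other side.
-/

open Finset

namespace Finset

theorem card_filter_Icc_one_lt {a m : ℕ} (hm : m ≤ a + 1) :
    ((Icc 1 a).filter (· < m)).card = m - 1 := by
  have h : (Icc 1 a).filter (· < m) = Ico 1 m := by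
    ext; simp only [mem_filter, mem_Icc, mem_Ico]; omega
  rw [h, Nat.card_Ico]

theorem card_filter_Icc_one_gt (a m : ℕ) : ((Icc 1 a).filter (m < ·)).card = a - m := by
  have h : (Icc 1 a).filter (m < ·) = Ioc m a := by
    ext; simp only [mem_filter, mem_Icc, mem_Ioc]; omega
  rw [h, Nat.card_Ioc]

theorem card_filter_product_Icc_one_snd_lt {α : Type*} (s : Finset α) {a m : ℕ}
    (hm : m ≤ a + 1) : ((s ×ˢ Icc 1 a).filter (fun p => p.2 < m)).card = s.card * (m - 1) := by
  rw [filter_product_right (· < m), card_product, card_filter_Icc_one_lt hm]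

theorem card_filter_Icc_one_product_separating {a b m l : ℕ} (hma : m ≤ a) (hlb : l ≤ b) :
    ((Icc 1 a ×ˢ Icc 1 b).filter
        (fun p => (p.1 < m ∧ l < p.2) ∨ (m < p.1 ∧ p.2 < l))).card
      = (m - 1) * (b - l) + (l - 1) * (a - m) := by
  have hdisj : Disjoint ((Icc 1 a).filter (· < m)) ((Icc 1 a).filter (m < ·)) :=
    disjoint_filter_filter' _ _ fun _ hlt hgt x hx => (hlt x hx).asymm (hgt x hx)
  rw [filter_or, filter_product (· < m) (l < ·), filter_product (m < ·) (· < l),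
    card_union_of_disjoint (disjoint_product.mpr (Or.inl hdisj)), card_product, card_product,
    card_filter_Icc_one_lt (by omega), card_filter_Icc_one_lt (by omega),
    card_filter_Icc_one_gt, card_filter_Icc_one_gt, Nat.mul_comm (a - m)]

end Finset

/-- Combinatorial crossing count in the three-arc drawing `D_{a,b,c}`:
the edge from the `m`-th upper vertex to the `l`-th lower vertex is crossed exactly
by the upper-lower edges separating it, together with all edges from third-arc
vertices to upper vertices left of `m` or lower vertices left of `l`; the total is
`(m−1)(b−l) + (l−1)(a−m) + c(m+l−2)`. -/
theorem stmt13 (a b c m l : ℕ)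
    (hm1 : 1 ≤ m) (hma : m ≤ a) (hl1 : 1 ≤ l) (hlb : l ≤ b) :
    ((Finset.Icc 1 a ×ˢ Finset.Icc 1 b).filter
        (fun p => (p.1 < m ∧ l < p.2) ∨ (m < p.1 ∧ p.2 < l))).card
      + ((Finset.Icc 1 c ×ˢ Finset.Icc 1 a).filter (fun p => p.2 < m)).card
      + ((Finset.Icc 1 c ×ˢ Finset.Icc 1 b).filter (fun p => p.2 < l)).card
    = (m - 1) * (b - l) + (l - 1) * (a - m) + c * (m + l - 2) := by
  rw [card_filter_Icc_one_product_separating hma hlb,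
    card_filter_product_Icc_one_snd_lt _ (by omega),
    card_filter_product_Icc_one_snd_lt _ (by omega),
    Nat.card_Icc, Nat.add_sub_cancel, add_assoc, ← Nat.mul_add]
  congr 2
  omega
end

section
/- Let n, k, i, j, m, l be positive integers with n/100 ≤ i, j < n/50 and n < k < n^{1.2}. If (m−1)·(⌈n/2⌉−j−l) + (l−1)·(⌊n/2⌋−i−m) + (i+j)·(m+l−2) = k, with 1 ≤ m ≤ ⌊n/2⌋−i and 1 ≤ l ≤ ⌈n/2⌉−j, then m + l ≤ 2 + 100·k/n (in particular m + l = O(k/n)). -/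
theorem Nat.cast_le_two_add_div_of_mul_tsub_le {s c k : ℕ} {b : ℝ} (hb : 0 < b)
    (hbc : b ≤ c) (h : c * (s - 2) ≤ k) : (s : ℝ) ≤ 2 + k / b := by
  have hkb : 0 ≤ (k : ℝ) / b := by positivity
  rcases le_or_gt s 2 with hs | hs
  · have : (s : ℝ) ≤ 2 := by exact_mod_cast hs
    linarith
  have hcast : ((s - 2 : ℕ) : ℝ) = s - 2 := by push_cast [Nat.cast_sub hs.le]; ring
  have hk : b * ((s - 2 : ℕ) : ℝ) ≤ k :=
    calc b * ((s - 2 : ℕ) : ℝ) ≤ c * ((s - 2 : ℕ) : ℝ) := by gcongr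
      _ ≤ k := by exact_mod_cast h
  rw [hcast, ← le_div_iff₀' hb] at hk
  linarith

theorem stmt14_general (n k i j m l : ℕ)
    (hn : 0 < n)
    (hi1 : (n : ℝ) / 100 ≤ i)
    (hj1 : (n : ℝ) / 100 ≤ j)
    (heq : (m - 1) * ((n + 1) / 2 - j - l) + (l - 1) * (n / 2 - i - m)
        + (i + j) * (m + l - 2) = k) :
    (m : ℝ) + l ≤ 2 + 100 * (k : ℝ) / n := by
  have hnr : (0 : ℝ) < n := by exact_mod_cast hn
  have hcross : (i + j) * (m + l - 2) ≤ k := heq ▸ Nat.le_add_left _ _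
  have hij : (n : ℝ) / 50 ≤ ((i + j : ℕ) : ℝ) := by push_cast; linarith
  have hbound := Nat.cast_le_two_add_div_of_mul_tsub_le (by positivity) hij hcross
  calc (m : ℝ) + l = ((m + l : ℕ) : ℝ) := by push_cast; rfl
    _ ≤ 2 + k / (n / 50) := hbound
    _ = 2 + 50 * k / n := by field_simp
    _ ≤ 2 + 100 * k / n := by gcongr; norm_num

/-- In the drawing `D(i,j) = D_{⌊n/2⌋−i, ⌈n/2⌉−j, i+j}` with
`n/100 ≤ i, j < n/50` and `n < k < n^{1.2}`, if the edge from upper vertex `m` to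
lower vertex `l` has exactly `k` crossings, then `m + l ≤ 2 + 100·k/n`. -/
theorem stmt14 (n k i j m l : ℕ)
    (hn : 0 < n) (hi0 : 0 < i) (hj0 : 0 < j) (hm0 : 0 < m) (hl0 : 0 < l)
    (hi1 : (n : ℝ) / 100 ≤ i) (hi2 : (i : ℝ) < (n : ℝ) / 50)
    (hj1 : (n : ℝ) / 100 ≤ j) (hj2 : (j : ℝ) < (n : ℝ) / 50)
    (hk1 : n < k) (hk2 : (k : ℝ) < (n : ℝ) ^ (1.2 : ℝ))
    (hm : m ≤ n / 2 - i) (hl : l ≤ (n + 1) / 2 - j)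
    (heq : (m - 1) * ((n + 1) / 2 - j - l) + (l - 1) * (n / 2 - i - m)
        + (i + j) * (m + l - 2) = k) :
    (m : ℝ) + l ≤ 2 + 100 * (k : ℝ) / n :=
  stmt14_general n k i j m l hn hi1 hj1 heq
end
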